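/- Let Δ, d, k be positive integers with (d+1)k ≥ Δ + 1, and let G be an n-vertex graph with maximum degree at most Δ. Suppose that G has no equitable d-degenerate k-colouring but has a minimal near-equitable d-degenerate k-colouring φ. Then for every accessible colour class V of φ, the set B of vertices in non-accessible classes satisfies |B| ≥ b·|V| + 1, where b is the number of non-accessible classes. -/

import Mathlib

open Finset

attribute [local instance] Classical.propDecidable

variable {V : Type*} [Fintype V] [DecidableEq V]

/-- The subgraph of `G` induced on the vertex set `S` is `d`-degenerate: every nonempty
subset of `S` contains a vertex having at most `d` neighbours inside that subset. -/
def DegenOn (G : SimpleGraph V) (d : ℕ) (S : Finset V) : Prop :=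
  ∀ s : Finset V, s ⊆ S → s.Nonempty → ∃ v ∈ s, (s.filter (fun u => G.Adj v u)).card ≤ d

/-- The colour class of colour `i` under the colouring `f`. -/
def cls {k : ℕ} (f : V → Fin k) (i : Fin k) : Finset V :=
  Finset.univ.filter (fun v => f v = i)

/-- `f` is a `d`-degenerate `k`-colouring of `G`: each colour class induces a
`d`-degenerate subgraph. -/
def IsDegenColoring (G : SimpleGraph V) (d : ℕ) {k : ℕ} (f : V → Fin k) : Prop :=
  ∀ i, DegenOn G d (cls f i)

/-- `f` is an equitable colouring: any two colour classes differ in size by at most one. -/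
def IsEquitable {k : ℕ} (f : V → Fin k) : Prop :=
  ∀ i j, (cls f i).card ≤ (cls f j).card + 1

/-- `f` is a near-equitable `k`-colouring of an `n`-vertex graph (conditions (E1),(E2)):
with the colour classes sorted by size, `⌊n/k⌋ − 1 ≤ |C_1| ≤ ⌊n/k⌋ ≤ |C_2| ≤ … ≤
|C_{k−1}| ≤ ⌈n/k⌉ ≤ |C_k| ≤ ⌈n/k⌉ + 1`, and `2 ≤ |C_k| − |C_1| ≤ 3`.  Stated label-free:
all class sizes lie in `[⌊n/k⌋ − 1, ⌈n/k⌉ + 1]`, at most one class is smaller than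
`⌊n/k⌋`, at most one class is larger than `⌈n/k⌉`, some class has size `≤ ⌊n/k⌋`, some
class has size `≥ ⌈n/k⌉`, and the largest class exceeds the smallest by at least `2` and
at most `3`.  (Here `⌈n/k⌉ = (n + k - 1) / k` in natural division.) -/
def NearEquitable (n : ℕ) {k : ℕ} (f : V → Fin k) : Prop :=
  (∀ i, n / k - 1 ≤ (cls f i).card ∧ (cls f i).card ≤ (n + k - 1) / k + 1) ∧
  (Finset.univ.filter (fun i => (cls f i).card < n / k)).card ≤ 1 ∧
  (Finset.univ.filter (fun i => (n + k - 1) / k < (cls f i).card)).card ≤ 1 ∧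
  (∃ i, (cls f i).card ≤ n / k) ∧
  (∃ i, (n + k - 1) / k ≤ (cls f i).card) ∧
  (∃ i j, (cls f i).card + 2 ≤ (cls f j).card) ∧
  (∀ i j, (cls f j).card ≤ (cls f i).card + 3)

/-- The vertex `v` is movable to the colour class of colour `j`: `v` has a different
colour, and adding `v` to that class keeps it `d`-degenerate. -/
def Movable (G : SimpleGraph V) (d : ℕ) {k : ℕ} (f : V → Fin k) (v : V) (j : Fin k) :
    Prop :=
  f v ≠ j ∧ DegenOn G d (insert v (cls f j))

/-- Arc of the auxiliary digraph `D`: there is an arc from colour `i` to colour `j`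
(`i ≠ j`) iff some vertex of class `i` is movable to class `j`. -/
def MvArc (G : SimpleGraph V) (d : ℕ) {k : ℕ} (f : V → Fin k) (i j : Fin k) : Prop :=
  i ≠ j ∧ ∃ v, f v = i ∧ Movable G d f v j

/-- Class `i` is accessible to class `j`: `D` has a (possibly trivial) directed path from
`i` to `j`. -/
def AccTo (G : SimpleGraph V) (d : ℕ) {k : ℕ} (f : V → Fin k) : Fin k → Fin k → Prop :=
  Relation.ReflTransGen (MvArc G d f)

/-- Accessibility within the subdigraph of `D` induced on the set `S` of colours. -/
def AccToWithin (G : SimpleGraph V) (d : ℕ) {k : ℕ} (f : V → Fin k)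
    (S : Finset (Fin k)) : Fin k → Fin k → Prop :=
  Relation.ReflTransGen (fun i j => i ∈ S ∧ j ∈ S ∧ MvArc G d f i j)

/-- Class `i` has minimum size among all colour classes. -/
def IsMinClass {k : ℕ} (f : V → Fin k) (i : Fin k) : Prop :=
  ∀ j, (cls f i).card ≤ (cls f j).card

/-- Class `i` is accessible: it is accessible to some colour class of minimum size. -/
def Accessible (G : SimpleGraph V) (d : ℕ) {k : ℕ} (f : V → Fin k) (i : Fin k) : Prop :=
  ∃ j, IsMinClass f j ∧ AccTo G d f i j

/-- `𝒜`: the set of accessible colours. -/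
noncomputable def Aset (G : SimpleGraph V) (d : ℕ) {k : ℕ} (f : V → Fin k) :
    Finset (Fin k) :=
  Finset.univ.filter (fun i => Accessible G d f i)

/-- `ℬ`: the set of non-accessible colours. -/
noncomputable def Bset (G : SimpleGraph V) (d : ℕ) {k : ℕ} (f : V → Fin k) :
    Finset (Fin k) :=
  Finset.univ.filter (fun i => ¬ Accessible G d f i)

/-- `A`: the union of the accessible colour classes. -/
noncomputable def Averts (G : SimpleGraph V) (d : ℕ) {k : ℕ} (f : V → Fin k) : Finset V :=
  Finset.univ.filter (fun v => Accessible G d f (f v))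

/-- `B`: the union of the non-accessible colour classes. -/
noncomputable def Bverts (G : SimpleGraph V) (d : ℕ) {k : ℕ} (f : V → Fin k) : Finset V :=
  Finset.univ.filter (fun v => ¬ Accessible G d f (f v))

/-- The colours used by the subdigraphs `D_1, …, D_{i-1}` preceding `D_i`. -/
def UsedBefore {k q : ℕ} (𝒟 : Fin q → Finset (Fin k)) (i : Fin q) : Finset (Fin k) :=
  (Finset.univ.filter (fun i' => i' < i)).biUnion 𝒟

/-- `(𝒟, trm)` is the decomposition `D_1, …, D_q` of `𝒜` with terminals
`trm 1, …, trm q`: at each step `i`, `trm i` is the smallest-index minimum-size colour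
class not yet used (here "smallest index" is the smallest colour, the classes being
labelled in non-decreasing order of size), `D_i` consists of the unused accessible classes
accessible to `trm i`, the process exhausts all minimum-size classes, and every accessible
class belongs to some `D_i`. -/
def IsDecomp (G : SimpleGraph V) (d : ℕ) {k : ℕ} (f : V → Fin k) {q : ℕ}
    (𝒟 : Fin q → Finset (Fin k)) (trm : Fin q → Fin k) : Prop :=
  (∀ i : Fin q,
      IsMinClass f (trm i) ∧
      trm i ∉ UsedBefore 𝒟 i ∧
      (∀ j, IsMinClass f j → j ∉ UsedBefore 𝒟 i → trm i ≤ j) ∧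
      (∀ u, u ∈ 𝒟 i ↔
        Accessible G d f u ∧ u ∉ UsedBefore 𝒟 i ∧ AccTo G d f u (trm i))) ∧
  (∀ j, IsMinClass f j → ∃ i, j ∈ 𝒟 i) ∧
  (∀ u, Accessible G d f u → ∃ i, u ∈ 𝒟 i)

/-- `𝒯` for the choice `U` of removed class: the classes of `D_- − U` (here `Dl` is the
vertex set of `D_-` and `Cm` its terminal `C_-`) that are non-accessible to `C_-` in
`D_- − U`. -/
noncomputable def TSet (G : SimpleGraph V) (d : ℕ) {k : ℕ} (f : V → Fin k)
    (Dl : Finset (Fin k)) (Cm U : Fin k) : Finset (Fin k) :=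
  (Dl.erase U).filter (fun W => ¬ AccToWithin G d f (Dl.erase U) W Cm)

/-- `U` is a valid choice of `U_-`: it belongs to `D_-` and minimises the number of
classes of `D_- − U` that are non-accessible to `C_-` there. -/
def IsUminus (G : SimpleGraph V) (d : ℕ) {k : ℕ} (f : V → Fin k)
    (Dl : Finset (Fin k)) (Cm U : Fin k) : Prop :=
  U ∈ Dl ∧ ∀ U' ∈ Dl, (TSet G d f Dl Cm U).card ≤ (TSet G d f Dl Cm U').card

/-- `e` is a degeneracy ordering of the induced subgraph `G[S]` for the parameter `d`. -/
def IsDegOrdOn (G : SimpleGraph V) (d : ℕ) (S : Finset V)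
    (e : Fin S.card ≃ {x // x ∈ S}) : Prop :=
  ∀ i, (Finset.univ.filter (fun j => j < i ∧ G.Adj (e i : V) (e j : V))).card ≤ d

/-- The parameter `p` of a degeneracy ordering of `G[S]`: the largest (1-based) index
whose vertex has exactly `d` earlier neighbours (`0` if none). -/
noncomputable def ordPOn (G : SimpleGraph V) (d : ℕ) (S : Finset V)
    (e : Fin S.card ≃ {x // x ∈ S}) : ℕ :=
  (Finset.univ.filter (fun i =>
    (Finset.univ.filter (fun j => j < i ∧ G.Adj (e i : V) (e j : V))).card = d)).sup
      (fun i => (i : ℕ) + 1)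

/-- `p(G[S])`: the minimum of `ordPOn` over all degeneracy orderings of `G[S]`. -/
noncomputable def pMinOn (G : SimpleGraph V) (d : ℕ) (S : Finset V) : ℕ :=
  sInf {p | ∃ e : Fin S.card ≃ {x // x ∈ S}, IsDegOrdOn G d S e ∧ ordPOn G d S e = p}

/-- `V*` of the ordering `e` of `G[S]`: the set of its first `ordPOn G d S e` vertices. -/
noncomputable def VstarOf (G : SimpleGraph V) (d : ℕ) (S : Finset V)
    (e : Fin S.card ≃ {x // x ∈ S}) : Finset V :=
  (Finset.univ.filter (fun i : Fin S.card => (i : ℕ) < ordPOn G d S e)).image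
    (fun i => (e i : V))

/-- The size of the largest colour class, `|C_k|`. -/
def maxS {k : ℕ} (f : V → Fin k) : ℕ := Finset.univ.sup (fun i => (cls f i).card)

/-- The size of the smallest colour class, `|C_1|`. -/
noncomputable def minS {k : ℕ} (f : V → Fin k) : ℕ := sInf {m | ∃ i, (cls f i).card = m}

/-- `Σ_{V ∈ 𝒯} |V*| = Σ_{V ∈ 𝒯} p(G[V])`. -/
noncomputable def sumT (G : SimpleGraph V) (d : ℕ) {k : ℕ} (f : V → Fin k)
    (𝒯 : Finset (Fin k)) : ℕ :=
  ∑ i ∈ 𝒯, pMinOn G d (cls f i)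

/-- Lexicographic comparison of triples of naturals. -/
def Lex3Le (x y : ℕ × ℕ × ℕ) : Prop :=
  x.1 < y.1 ∨ (x.1 = y.1 ∧ (x.2.1 < y.2.1 ∨ (x.2.1 = y.2.1 ∧ x.2.2 ≤ y.2.2)))

/-- The triple `(|C_k| − |C_1|, b, Σ_{V ∈ 𝒯} |V*|)` associated with a colouring `f` and a
choice `𝒯` of the set of classes `𝒯`. -/
noncomputable def tripleOf (G : SimpleGraph V) (d : ℕ) {k : ℕ} (f : V → Fin k)
    (𝒯 : Finset (Fin k)) : ℕ × ℕ × ℕ :=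
  (maxS f - minS f, (Bset G d f).card, sumT G d f 𝒯)

/-- The near-equitable `d`-degenerate colouring `f` (with its associated set `𝒯f`) is
minimal: its triple `(|C_k| − |C_1|, b, Σ_{V ∈ 𝒯} |V*|)` is lexicographically smallest
among all near-equitable `d`-degenerate `k`-colourings of `G` with their associated
choices of decomposition and `U_-`. -/
def MinimalNE (G : SimpleGraph V) (d : ℕ) {k : ℕ} (f : V → Fin k)
    (𝒯f : Finset (Fin k)) : Prop :=
  ∀ g : V → Fin k, IsDegenColoring G d g → NearEquitable (Fintype.card V) g →
    ∀ (q : ℕ) (hq : 0 < q) (𝒟 : Fin q → Finset (Fin k)) (trm : Fin q → Fin k),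
      IsDecomp G d g 𝒟 trm →
      ∀ U : Fin k,
        IsUminus G d g (𝒟 ⟨q - 1, by omega⟩) (trm ⟨q - 1, by omega⟩) U →
        Lex3Le (tripleOf G d f 𝒯f)
          (tripleOf G d g (TSet G d g (𝒟 ⟨q - 1, by omega⟩) (trm ⟨q - 1, by omega⟩) U))

/-- `G[S]` has an equitable `d`-degenerate `m`-colouring. -/
def HasEqDegenColOn (G : SimpleGraph V) (d : ℕ) (S : Finset V) (m : ℕ) : Prop :=
  ∃ g : V → Fin m,
    (∀ i, DegenOn G d (S.filter (fun v => g v = i))) ∧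
    (∀ i j, (S.filter (fun v => g v = i)).card ≤ (S.filter (fun v => g v = j)).card + 1)

set_option linter.unusedSectionVars false

/-!
A largest class of the minimal colouring is not accessible: moving one vertex along a path of
the auxiliary digraph from it to a smallest class would make the colouring equitable. Hence an
accessible class has at most `|C_1| + 1` vertices, for otherwise the spread is `3`, the class has
`|C_1| + 2` vertices, and the same move produces a near-equitable colouring of spread `2`,
contradicting minimality. Smallest classes are accessible, so every non-accessible class has at
least `|C_1| + 1` vertices and the largest one at least `|C_1| + 2`; summing over `ℬ` gives
`|B| ≥ b (|C_1| + 1) + 1`.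
-/

theorem List.exists_nodup_isChain_cons_of_relationReflTransGen {α : Type*} {r : α → α → Prop}
    {a b : α} (h : Relation.ReflTransGen r a b) :
    ∃ l, List.IsChain r (a :: l) ∧ (a :: l).getLast (List.cons_ne_nil _ _) = b ∧
      (a :: l).Nodup := by
  refine Relation.ReflTransGen.head_induction_on h
    ⟨[], .singleton _, rfl, List.nodup_singleton _⟩ ?_
  rintro a c hac - ⟨l, hchain, hlast, hnodup⟩
  by_cases ha : a ∈ c :: l
  · -- cut the cycle through `a`
    obtain ⟨s, t, hst⟩ := List.append_of_mem ha
    rw [hst] at hchain hnodup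
    refine ⟨t, hchain.right_of_append, ?_, hnodup.of_append_right⟩
    simp only [hst, List.getLast_append_of_ne_nil _ (List.cons_ne_nil a t)] at hlast
    exact hlast
  · exact ⟨c :: l, .cons_cons hac hchain, by rwa [List.getLast_cons_cons],
      List.nodup_cons.2 ⟨ha, hnodup⟩⟩

lemma Nat.add_sub_one_div_le_div_add_one {n k : ℕ} (hk : 0 < k) :
    (n + k - 1) / k ≤ n / k + 1 :=
  (Nat.div_le_div_right (Nat.sub_le _ 1)).trans (Nat.add_div_right n hk).le

theorem Finset.card_mul_add_one_le_sum {ι : Type*} [DecidableEq ι] {s : Finset ι} {w : ι → ℕ}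
    {c : ℕ} {a : ι} (ha : a ∈ s) (hs : ∀ j ∈ s, c ≤ w j) (hwa : c + 1 ≤ w a) :
    s.card * c + 1 ≤ ∑ j ∈ s, w j :=
  calc s.card * c + 1 = ∑ j ∈ s, (c + if j = a then 1 else 0) := by
        simp [Finset.sum_add_distrib, ha]
    _ ≤ ∑ j ∈ s, w j := Finset.sum_le_sum fun j hj => by
        split_ifs with h
        · exact h ▸ hwa
        · simpa using hs j hj

section Colouring

variable {k : ℕ}

lemma mem_cls {f : V → Fin k} {v : V} {i : Fin k} : v ∈ cls f i ↔ f v = i := by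
  simp [cls]

lemma DegenOn.mono {G : SimpleGraph V} {d : ℕ} {S T : Finset V} (hS : DegenOn G d S)
    (h : T ⊆ S) : DegenOn G d T :=
  fun s hs hne => hS s (hs.trans h) hne

lemma cls_update_of_ne {f : V → Fin k} {v : V} {j Z : Fin k} (h : Z ≠ j) :
    cls (Function.update f v j) Z = (cls f Z).erase v := by
  ext u
  by_cases hu : u = v
  · subst hu; simp [cls, h.symm]
  · simp [cls, hu]

lemma cls_update_self {f : V → Fin k} {v : V} {j : Fin k} :
    cls (Function.update f v j) j = insert v (cls f j) := by
  ext u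
  by_cases hu : u = v
  · subst hu; simp [cls]
  · simp [cls, hu]

/-- The class sizes of `g` are those of `f` after moving one vertex from class `X` to class
`C` (nothing moves if `X = C`). -/
def TransfersOne (f g : V → Fin k) (X C : Fin k) : Prop :=
  ∀ Z, (cls g Z).card + (if Z = X then 1 else 0) = (cls f Z).card + (if Z = C then 1 else 0)

lemma TransfersOne.refl (f : V → Fin k) (X : Fin k) : TransfersOne f f X X := fun _ => rfl

lemma TransfersOne.trans {f g h : V → Fin k} {X Y C : Fin k} (hgh : TransfersOne g h X Y)
    (hfg : TransfersOne f g Y C) : TransfersOne f h X C := by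
  intro Z
  have h1 := hgh Z
  have h2 := hfg Z
  omega

lemma transfersOne_update {f : V → Fin k} {v : V} {j : Fin k} (hv : f v ≠ j) :
    TransfersOne f (Function.update f v j) (f v) j := by
  intro Z
  by_cases hZj : Z = j
  · subst hZj
    rw [cls_update_self, Finset.card_insert_of_notMem (by simpa [mem_cls] using hv)]
    simp [Ne.symm hv]
  · rw [cls_update_of_ne hZj]
    by_cases hZv : Z = f v
    · subst hZv
      simp [hZj, Finset.card_erase_add_one (mem_cls.2 rfl)]
    · rw [Finset.erase_eq_of_notMem (fun h => hZv (mem_cls.1 h).symm)]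
      simp [hZj, hZv]

end Colouring

section Moving

variable {G : SimpleGraph V} {d k : ℕ} {f : V → Fin k}

/-- Each class on the path passes one vertex on to the next one. As no class is visited twice,
every class gains and loses at most one vertex, so the movability granted by `f` still applies
to the recoloured classes. -/
lemma exists_transfer_of_isChain (hf : IsDegenColoring G d f) (l : List (Fin k)) (X : Fin k)
    (hchain : List.IsChain (MvArc G d f) (X :: l)) (hnodup : (X :: l).Nodup) :
    ∃ g : V → Fin k, IsDegenColoring G d g ∧
      TransfersOne f g X ((X :: l).getLast (List.cons_ne_nil _ _)) ∧
      (∀ u, f u ∉ X :: l → g u = f u) ∧ (∀ u, g u ∉ l → g u = f u) := by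
  induction l generalizing X with
  | nil => exact ⟨f, hf, TransfersOne.refl f X, fun _ _ => rfl, fun _ _ => rfl⟩
  | cons b t ih =>
    obtain ⟨⟨hXb, v, hvX, -, hdegen⟩, hchain'⟩ := List.isChain_cons_cons.1 hchain
    obtain ⟨hX, hnodup'⟩ := List.nodup_cons.1 hnodup
    obtain ⟨g, hg, htrans, hout, hin⟩ := ih b hchain' hnodup'
    have hgv : g v = X := (hout v (hvX ▸ hX)).trans hvX
    have hgb : cls g b ⊆ cls f b := fun u hu => by
      have hgu : g u = b := mem_cls.1 hu
      have hbt : b ∉ t := (List.nodup_cons.1 hnodup').1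
      exact mem_cls.2 ((hin u (hgu ▸ hbt)).symm.trans hgu)
    refine ⟨Function.update g v b, fun i => ?_, ?_, fun u hu => ?_, fun u hu => ?_⟩
    · by_cases hi : i = b
      · subst hi
        rw [cls_update_self]
        exact hdegen.mono (Finset.insert_subset_insert v hgb)
      · rw [cls_update_of_ne hi]
        exact (hg i).mono (Finset.erase_subset _ _)
    · rw [List.getLast_cons_cons]
      have hstep := transfersOne_update (f := g) (v := v) (j := b) (by rw [hgv]; exact hXb)
      rw [hgv] at hstep
      exact hstep.trans htrans
    · have huv : u ≠ v := by rintro rfl; simp [hvX] at hu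
      rw [Function.update_of_ne huv]
      exact hout u (fun h => hu (List.mem_cons_of_mem X h))
    · have huv : u ≠ v := by rintro rfl; simp at hu
      rw [Function.update_of_ne huv] at hu ⊢
      exact hin u (fun h => hu (List.mem_cons_of_mem b h))

lemma Accessible.exists_transfer (hf : IsDegenColoring G d f) {X : Fin k}
    (hX : Accessible G d f X) :
    ∃ (g : V → Fin k) (C : Fin k), IsMinClass f C ∧ IsDegenColoring G d g ∧
      TransfersOne f g X C := by
  obtain ⟨C, hC, hpath⟩ := hX
  obtain ⟨l, hchain, hlast, hnodup⟩ :=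
    List.exists_nodup_isChain_cons_of_relationReflTransGen hpath
  obtain ⟨g, hg, htrans, -⟩ := exists_transfer_of_isChain hf l X hchain hnodup
  exact ⟨g, C, hC, hg, hlast ▸ htrans⟩

end Moving

section ClassSizes

variable {k : ℕ} {f g : V → Fin k}

lemma minS_le_card (f : V → Fin k) (j : Fin k) : minS f ≤ (cls f j).card :=
  Nat.sInf_le ⟨j, rfl⟩

lemma exists_card_eq_minS (hk : 0 < k) (f : V → Fin k) : ∃ j, (cls f j).card = minS f :=
  Nat.sInf_mem (s := {m | ∃ i, (cls f i).card = m}) ⟨_, ⟨0, hk⟩, rfl⟩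

lemma isMinClass_iff (hk : 0 < k) {j : Fin k} : IsMinClass f j ↔ (cls f j).card = minS f := by
  refine ⟨fun h => le_antisymm ?_ (minS_le_card f j), fun h j' => h ▸ minS_le_card f j'⟩
  obtain ⟨j₀, hj₀⟩ := exists_card_eq_minS hk f
  exact hj₀ ▸ h j₀

lemma minS_eq_of_forall_le {a : ℕ} {X : Fin k} (h : ∀ Z, a ≤ (cls f Z).card)
    (hX : (cls f X).card = a) : minS f = a :=
  le_antisymm (hX ▸ minS_le_card f X) (le_csInf ⟨_, X, rfl⟩ (by rintro _ ⟨Z, rfl⟩; exact h Z))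

lemma card_le_maxS (f : V → Fin k) (j : Fin k) : (cls f j).card ≤ maxS f :=
  Finset.le_sup (f := fun i => (cls f i).card) (Finset.mem_univ j)

lemma exists_card_eq_maxS (hk : 0 < k) (f : V → Fin k) : ∃ j, (cls f j).card = maxS f := by
  obtain ⟨j, -, hj⟩ := Finset.exists_mem_eq_sup (Finset.univ : Finset (Fin k))
    ⟨⟨0, hk⟩, Finset.mem_univ _⟩ (fun i => (cls f i).card)
  exact ⟨j, hj.symm⟩

lemma maxS_eq_of_forall_le {a : ℕ} {X : Fin k} (h : ∀ Z, (cls f Z).card ≤ a)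
    (hX : (cls f X).card = a) : maxS f = a :=
  le_antisymm (Finset.sup_le fun Z _ => h Z) (hX ▸ card_le_maxS f X)

lemma TransfersOne.card_source {X C : Fin k} (h : TransfersOne f g X C) (hXC : X ≠ C) :
    (cls g X).card + 1 = (cls f X).card := by
  simpa [hXC] using h X

lemma TransfersOne.card_target {X C : Fin k} (h : TransfersOne f g X C) (hXC : X ≠ C) :
    (cls g C).card = (cls f C).card + 1 := by
  simpa [Ne.symm hXC] using h C

lemma TransfersOne.card_of_ne {X C Z : Fin k} (h : TransfersOne f g X C) (hZX : Z ≠ X)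
    (hZC : Z ≠ C) : (cls g Z).card = (cls f Z).card := by
  simpa [hZX, hZC] using h Z

end ClassSizes

namespace NearEquitable

variable {n k : ℕ} {f g : V → Fin k}

lemma pos (hne : NearEquitable n f) : 0 < k :=
  Fin.pos hne.2.2.2.1.choose

lemma div_le_minS_add_one (hne : NearEquitable n f) : n / k ≤ minS f + 1 := by
  obtain ⟨C, hC⟩ := exists_card_eq_minS hne.pos f
  have := (hne.1 C).1
  omega

lemma maxS_le_ceil_add_one (hne : NearEquitable n f) : maxS f ≤ (n + k - 1) / k + 1 := by
  obtain ⟨X, hX⟩ := exists_card_eq_maxS hne.pos f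
  exact hX ▸ (hne.1 X).2

lemma minS_add_two_le_maxS (hne : NearEquitable n f) : minS f + 2 ≤ maxS f := by
  obtain ⟨i, j, hij⟩ := hne.2.2.2.2.2.1
  have := minS_le_card f i
  have := card_le_maxS f j
  omega

lemma maxS_le_minS_add_three (hne : NearEquitable n f) : maxS f ≤ minS f + 3 := by
  obtain ⟨C, hC⟩ := exists_card_eq_minS hne.pos f
  obtain ⟨X, hX⟩ := exists_card_eq_maxS hne.pos f
  have := hne.2.2.2.2.2.2 C X
  omega

lemma div_le_card_of_ne (hne : NearEquitable n f) {C Z : Fin k} (hC : IsMinClass f C)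
    (hZC : Z ≠ C) : n / k ≤ (cls f Z).card := by
  by_contra hlt
  refine hZC (Finset.card_le_one.1 hne.2.1 Z ?_ C ?_) <;>
    simp only [Finset.mem_filter, Finset.mem_univ, true_and]
  · omega
  · exact lt_of_le_of_lt (hC Z) (by omega)

lemma card_le_ceil_of_ne (hne : NearEquitable n f) {X Z : Fin k}
    (hX : (cls f X).card = maxS f) (hZX : Z ≠ X) : (cls f Z).card ≤ (n + k - 1) / k := by
  by_contra hlt
  refine hZX (Finset.card_le_one.1 hne.2.2.1 Z ?_ X ?_) <;>
    simp only [Finset.mem_filter, Finset.mem_univ, true_and]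
  · omega
  · exact lt_of_lt_of_le (by omega) (hX ▸ card_le_maxS f Z)

lemma isEquitable_of_transfersOne (hne : NearEquitable n f) {X C : Fin k}
    (h : TransfersOne f g X C) (hX : (cls f X).card = maxS f) (hC : IsMinClass f C) :
    IsEquitable g := by
  have hk := hne.pos
  have hCs := (isMinClass_iff hk).1 hC
  have hs := hne.div_le_minS_add_one
  have hS := hne.maxS_le_ceil_add_one
  have hsS := hne.minS_add_two_le_maxS
  have hceil := Nat.add_sub_one_div_le_div_add_one (n := n) hk
  have hXC : X ≠ C := by rintro rfl; omega
  have hbounds : ∀ Z, n / k ≤ (cls g Z).card ∧ (cls g Z).card ≤ (n + k - 1) / k := by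
    intro Z
    by_cases hZX : Z = X
    · have := h.card_source hXC
      subst hZX
      omega
    by_cases hZC : Z = C
    · have := h.card_target hXC
      subst hZC
      omega
    rw [h.card_of_ne hZX hZC]
    exact ⟨hne.div_le_card_of_ne hC hZC, hne.card_le_ceil_of_ne hX hZX⟩
  intro i j
  have := (hbounds i).2
  have := (hbounds j).1
  omega

lemma of_transfersOne (hne : NearEquitable n f) {X C : Fin k} (h : TransfersOne f g X C)
    (hspread : maxS f = minS f + 3) (hX : (cls f X).card = minS f + 2) (hC : IsMinClass f C) :
    NearEquitable n g ∧ maxS g = minS g + 2 := by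
  have hk := hne.pos
  have hCs := (isMinClass_iff hk).1 hC
  have hs := hne.div_le_minS_add_one
  have hS := hne.maxS_le_ceil_add_one
  have hceil := Nat.add_sub_one_div_le_div_add_one (n := n) hk
  have hfloor : n / k ≤ (n + k - 1) / k := Nat.div_le_div_right (by omega)
  have hm : n / k = minS f + 1 := by omega
  have hM : (n + k - 1) / k = minS f + 2 := by omega
  obtain ⟨Y, hY⟩ := exists_card_eq_maxS hk f
  have hXC : X ≠ C := by rintro rfl; omega
  have hYX : Y ≠ X := by rintro rfl; omega
  have hYC : Y ≠ C := by rintro rfl; omega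
  have hgX : (cls g X).card = minS f + 1 := by have := h.card_source hXC; omega
  have hgC : (cls g C).card = minS f + 1 := by have := h.card_target hXC; omega
  have hgY : (cls g Y).card = minS f + 3 := by rw [h.card_of_ne hYX hYC]; omega
  have hbounds : ∀ Z, minS f + 1 ≤ (cls g Z).card ∧ (cls g Z).card ≤ minS f + 3 := by
    intro Z
    by_cases hZX : Z = X
    · subst hZX; omega
    by_cases hZC : Z = C
    · subst hZC; omega
    rw [h.card_of_ne hZX hZC]
    exact ⟨hm ▸ hne.div_le_card_of_ne hC hZC, hspread ▸ card_le_maxS f Z⟩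
  have hminS : minS g = minS f + 1 := minS_eq_of_forall_le (fun Z => (hbounds Z).1) hgX
  have hmaxS : maxS g = minS f + 3 := maxS_eq_of_forall_le (fun Z => (hbounds Z).2) hgY
  refine ⟨⟨fun i => ?_, ?_, ?_, ⟨X, by omega⟩, ⟨Y, by omega⟩, ⟨X, Y, by omega⟩,
    fun i j => ?_⟩, by omega⟩
  · have := hbounds i
    omega
  · refine Finset.card_le_one.2 fun Z hZ _ _ => ?_
    simp only [Finset.mem_filter, Finset.mem_univ, true_and] at hZ
    have := hbounds Z
    omega
  · refine (Finset.card_le_card fun Z hZ => ?_).trans hne.2.2.1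
    simp only [Finset.mem_filter, Finset.mem_univ, true_and] at hZ ⊢
    have hZX : Z ≠ X := by rintro rfl; omega
    have hZC : Z ≠ C := by rintro rfl; omega
    rwa [← h.card_of_ne hZX hZC]
  · have := hbounds i
    have := hbounds j
    omega

end NearEquitable

section Decomposition

variable (G : SimpleGraph V) (d : ℕ) {k : ℕ} (g : V → Fin k)

noncomputable def unusedMinClasses (u : Finset (Fin k)) : Finset (Fin k) :=
  Finset.univ.filter fun j => IsMinClass g j ∧ j ∉ u

/-- The next part `D_i` of the decomposition, once the classes in `u` have been used. -/
noncomputable def nextPart (u : Finset (Fin k)) : Finset (Fin k) :=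
  if h : (unusedMinClasses g u).Nonempty then
    Finset.univ.filter fun x =>
      Accessible G d g x ∧ x ∉ u ∧ AccTo G d g x ((unusedMinClasses g u).min' h)
  else ∅

/-- The union `D_1 ∪ … ∪ D_n`. -/
noncomputable def usedParts : ℕ → Finset (Fin k)
  | 0 => ∅
  | n + 1 => usedParts n ∪ nextPart G d g (usedParts n)

variable {G d g}

lemma mem_nextPart {u : Finset (Fin k)} (h : (unusedMinClasses g u).Nonempty) {x : Fin k} :
    x ∈ nextPart G d g u ↔
      Accessible G d g x ∧ x ∉ u ∧ AccTo G d g x ((unusedMinClasses g u).min' h) := by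
  simp [nextPart, h]

lemma min'_unusedMinClasses_mem {u : Finset (Fin k)} (h : (unusedMinClasses g u).Nonempty) :
    IsMinClass g ((unusedMinClasses g u).min' h) ∧ (unusedMinClasses g u).min' h ∉ u := by
  simpa [unusedMinClasses] using Finset.min'_mem _ h

lemma min'_unusedMinClasses_mem_nextPart {u : Finset (Fin k)}
    (h : (unusedMinClasses g u).Nonempty) :
    (unusedMinClasses g u).min' h ∈ nextPart G d g u := by
  obtain ⟨hmin, hu⟩ := min'_unusedMinClasses_mem h
  exact (mem_nextPart h).2 ⟨⟨_, hmin, .refl⟩, hu, .refl⟩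

lemma mem_usedParts {n : ℕ} {x : Fin k} :
    x ∈ usedParts G d g n ↔ ∃ m < n, x ∈ nextPart G d g (usedParts G d g m) := by
  induction n with
  | zero => simp [usedParts]
  | succ n ih =>
    simp only [usedParts, Finset.mem_union, ih, Nat.lt_succ_iff_lt_or_eq, or_and_right,
      exists_or, exists_eq_left]

lemma usedBefore_nextPart_usedParts {q : ℕ} (i : Fin q) :
    UsedBefore (fun i : Fin q => nextPart G d g (usedParts G d g i)) i =
      usedParts G d g i := by
  ext x
  simp only [UsedBefore, Finset.mem_biUnion, Finset.mem_filter, Finset.mem_univ, true_and,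
    mem_usedParts]
  exact ⟨fun ⟨m, hm, hx⟩ => ⟨m, hm, hx⟩, fun ⟨m, hm, hx⟩ => ⟨⟨m, hm.trans i.isLt⟩, hm, hx⟩⟩

lemma exists_not_nonempty_unusedMinClasses :
    ∃ n, ¬ (unusedMinClasses g (usedParts G d g n)).Nonempty := by
  by_contra! hactive
  have hgrow : ∀ n, n ≤ (usedParts G d g n).card := by
    intro n
    induction n with
    | zero => exact Nat.zero_le _
    | succ n ih =>
      have hlt : (usedParts G d g n).card < (usedParts G d g (n + 1)).card := by
        refine Finset.card_lt_card ⟨Finset.subset_union_left, fun hsub => ?_⟩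
        exact (min'_unusedMinClasses_mem (hactive n)).2
          (hsub (Finset.mem_union_right _ (min'_unusedMinClasses_mem_nextPart (hactive n))))
      omega
  have := (hgrow (k + 1)).trans (Finset.card_le_univ _)
  simp at this

lemma exists_isDecomp (hk : 0 < k) :
    ∃ (q : ℕ) (_ : 0 < q) (𝒟 : Fin q → Finset (Fin k)) (trm : Fin q → Fin k),
      IsDecomp G d g 𝒟 trm := by
  have hex := exists_not_nonempty_unusedMinClasses (G := G) (d := d) (g := g)
  set q := Nat.find hex
  have hstop : ¬ (unusedMinClasses g (usedParts G d g q)).Nonempty := Nat.find_spec hex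
  have hactive : ∀ i < q, (unusedMinClasses g (usedParts G d g i)).Nonempty :=
    fun i hi => not_not.1 (Nat.find_min hex hi)
  have hq : 0 < q := by
    refine Nat.pos_of_ne_zero fun hq0 => hstop ?_
    obtain ⟨j, hj⟩ := exists_card_eq_minS hk g
    exact ⟨j, by simp [unusedMinClasses, hq0, usedParts, (isMinClass_iff hk).2 hj]⟩
  set 𝒟 : Fin q → Finset (Fin k) := fun i => nextPart G d g (usedParts G d g i)
  set trm : Fin q → Fin k := fun i => (unusedMinClasses g _).min' (hactive i i.isLt)
  have hmem : ∀ i u, u ∈ 𝒟 i ↔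
      Accessible G d g u ∧ u ∉ UsedBefore 𝒟 i ∧ AccTo G d g u (trm i) := fun i u => by
    rw [usedBefore_nextPart_usedParts]
    exact mem_nextPart _
  have hcover : ∀ j, IsMinClass g j → ∃ i, j ∈ 𝒟 i := by
    intro j hj
    have hused : j ∈ usedParts G d g q := by
      by_contra hj'
      exact hstop ⟨j, by simp [unusedMinClasses, hj, hj']⟩
    obtain ⟨m, hm, hjm⟩ := mem_usedParts.1 hused
    exact ⟨⟨m, hm⟩, hjm⟩
  refine ⟨q, hq, 𝒟, trm, fun i => ?_, hcover, fun u hu => ?_⟩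
  · obtain ⟨hmin, hunused⟩ := min'_unusedMinClasses_mem (hactive i i.isLt)
    refine ⟨hmin, by rwa [usedBefore_nextPart_usedParts], fun j hj hj' => ?_, hmem i⟩
    rw [usedBefore_nextPart_usedParts] at hj'
    exact Finset.min'_le _ _ (by simp [unusedMinClasses, hj, hj'])
  · -- `u` reaches a minimum class `j ∈ D_i`, so `u` lies in `D_i` unless it was used before
    by_contra! hu'
    obtain ⟨j, hj, hpath⟩ := hu
    obtain ⟨i, hji⟩ := hcover j hj
    have hjtrm := ((hmem i j).1 hji).2.2
    refine hu' i ((hmem i u).2 ⟨⟨j, hj, hpath⟩, fun hused => ?_, hpath.trans hjtrm⟩)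
    obtain ⟨m, -, hm⟩ := Finset.mem_biUnion.1 hused
    exact hu' m hm

lemma IsDecomp.trm_mem {q : ℕ} {𝒟 : Fin q → Finset (Fin k)} {trm : Fin q → Fin k}
    (h : IsDecomp G d g 𝒟 trm) (i : Fin q) : trm i ∈ 𝒟 i := by
  obtain ⟨hmin, hunused, -, hmem⟩ := h.1 i
  exact (hmem _).2 ⟨⟨_, hmin, .refl⟩, hunused, .refl⟩

end Decomposition

section MinimalColouring

variable {G : SimpleGraph V} {d k : ℕ} {f : V → Fin k}

lemma card_bverts : (Bverts G d f).card = ∑ j ∈ Bset G d f, (cls f j).card := by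
  rw [Finset.card_eq_sum_card_fiberwise (f := f) (t := Bset G d f)
    (fun v hv => by simpa [Bverts, Bset] using hv)]
  refine Finset.sum_congr rfl fun j hj => congrArg Finset.card ?_
  ext v
  simp only [Bverts, Bset, cls, Finset.mem_filter, Finset.mem_univ, true_and] at hj ⊢
  exact ⟨fun h => h.2, fun h => ⟨h ▸ hj, h⟩⟩

lemma minS_add_one_le_card_of_not_accessible {X : Fin k} (hX : ¬ Accessible G d f X) :
    minS f + 1 ≤ (cls f X).card := by
  by_contra hlt
  have hmin : IsMinClass f X := fun j => (by omega : (cls f X).card ≤ minS f).trans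
    (minS_le_card f j)
  exact hX ⟨X, hmin, .refl⟩

lemma MinimalNE.maxS_sub_minS_le {Tf : Finset (Fin k)} (hmin : MinimalNE G d f Tf)
    {g : V → Fin k} (hg : IsDegenColoring G d g) (hgne : NearEquitable (Fintype.card V) g) :
    maxS f - minS f ≤ maxS g - minS g := by
  obtain ⟨q, hq, 𝒟, trm, hdec⟩ := exists_isDecomp (G := G) (d := d) (g := g) hgne.pos
  obtain ⟨U, hU, hUmin⟩ := Finset.exists_min_image (𝒟 ⟨q - 1, by omega⟩)
    (fun U => (TSet G d g (𝒟 ⟨q - 1, by omega⟩) (trm ⟨q - 1, by omega⟩) U).card)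
    ⟨_, hdec.trm_mem _⟩
  have hlex := hmin g hg hgne q hq 𝒟 trm hdec U ⟨hU, hUmin⟩
  simp only [Lex3Le, tripleOf] at hlex
  omega

lemma not_accessible_of_card_eq_maxS (hf : IsDegenColoring G d f)
    (hne : NearEquitable (Fintype.card V) f)
    (hnoeq : ¬ ∃ g : V → Fin k, IsDegenColoring G d g ∧ IsEquitable g) {X : Fin k}
    (hX : (cls f X).card = maxS f) : ¬ Accessible G d f X := fun hacc => by
  obtain ⟨g, C, hC, hg, htrans⟩ := hacc.exists_transfer hf
  exact hnoeq ⟨g, hg, hne.isEquitable_of_transfersOne htrans hX hC⟩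

lemma card_le_minS_add_one_of_accessible (hf : IsDegenColoring G d f)
    (hne : NearEquitable (Fintype.card V) f)
    (hnoeq : ¬ ∃ g : V → Fin k, IsDegenColoring G d g ∧ IsEquitable g) {Tf : Finset (Fin k)}
    (hmin : MinimalNE G d f Tf) {X : Fin k} (hacc : Accessible G d f X) :
    (cls f X).card ≤ minS f + 1 := by
  by_contra hlt
  have hXmax := card_le_maxS f X
  have hspread := hne.maxS_le_minS_add_three
  rcases hXmax.eq_or_lt with hXmax | hXmax
  · exact not_accessible_of_card_eq_maxS hf hne hnoeq hXmax hacc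
  -- otherwise the spread is `3` and moving a vertex out of `X` reduces it
  obtain ⟨g, C, hC, hg, htrans⟩ := hacc.exists_transfer hf
  obtain ⟨hgne, hgspread⟩ := hne.of_transfersOne htrans (by omega) (by omega) hC
  have := hmin.maxS_sub_minS_le hg hgne
  omega

end MinimalColouring

/-- **Lemma 2.4(b).**  For every accessible colour class `V` of the minimal
near-equitable `d`-degenerate `k`-colouring `f`, the set `B` of vertices lying in
non-accessible classes satisfies `|B| ≥ b·|V| + 1`, where `b` is the number of
non-accessible classes. -/
theorem B_card_lower_bound
    (d k : ℕ)
    (G : SimpleGraph V)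
    (hnoeq : ¬ ∃ g : V → Fin k, IsDegenColoring G d g ∧ IsEquitable g)
    (f : V → Fin k) (hf : IsDegenColoring G d f)
    (hne : NearEquitable (Fintype.card V) f)
    (Tf : Finset (Fin k))
    (hmin : MinimalNE G d f Tf) :
    ∀ i : Fin k, Accessible G d f i →
      (Bset G d f).card * (cls f i).card + 1 ≤ (Bverts G d f).card := by
  intro i hi
  obtain ⟨Y, hY⟩ := exists_card_eq_maxS hne.pos f
  have hYB : Y ∈ Bset G d f := by
    simpa [Bset] using not_accessible_of_card_eq_maxS hf hne hnoeq hY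
  have hYcard : minS f + 2 ≤ (cls f Y).card := hY ▸ hne.minS_add_two_le_maxS
  calc (Bset G d f).card * (cls f i).card + 1
      ≤ (Bset G d f).card * (minS f + 1) + 1 := by
        gcongr
        exact card_le_minS_add_one_of_accessible hf hne hnoeq hmin hi
    _ ≤ ∑ j ∈ Bset G d f, (cls f j).card :=
        Finset.card_mul_add_one_le_sum hYB (fun j hj => minS_add_one_le_card_of_not_accessible
          (by simpa [Bset] using hj)) hYcard
    _ = (Bverts G d f).card := card_bverts.symm
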